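/- Let α ∈ (0,2) and let the sequence {ξ^k} be generated, for k = 0,1,…,N+1, by the parallel splitting ALM step (producing w̃^k and ξ̃^k from ξ^k) followed by the rank-two relaxation step ξ^{k+1} = ξ^k − αℳ(ξ^k − ξ̃^k). Then for every ξ* ∈ Ξ*: ‖ξ^N − ξ^{N+1}‖²_ℋ ≤ (α/((2 − α)(N+1)))‖ξ^0 − ξ*‖²_ℋ. -/

import Mathlib

open Matrix
open scoped Kronecker

noncomputable section

/-- `Q₀ = [β I_p, e_p; −e_pᵀ, 1/β]`. -/
def Q0 (p : ℕ) (β : ℝ) : Matrix (Fin p ⊕ Unit) (Fin p ⊕ Unit) ℝ :=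
  Matrix.fromBlocks (β • (1 : Matrix (Fin p) (Fin p) ℝ))
    (Matrix.of fun _ _ => (1 : ℝ))
    (Matrix.of fun _ _ => (-1 : ℝ))
    (Matrix.of fun _ _ => 1 / β)

/-- `D₀ = diag(β, …, β, 1/β)`. -/
def D0 (p : ℕ) (β : ℝ) : Matrix (Fin p ⊕ Unit) (Fin p ⊕ Unit) ℝ :=
  Matrix.fromBlocks (β • (1 : Matrix (Fin p) (Fin p) ℝ)) 0 0
    (Matrix.of fun _ _ => 1 / β)

/-- `M₀ = I_{p+1} − (1/(p+1))·[e_p e_pᵀ, −(1/β)e_p; β e_pᵀ, p]`. -/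
def M0 (p : ℕ) (β : ℝ) : Matrix (Fin p ⊕ Unit) (Fin p ⊕ Unit) ℝ :=
  1 - (1 / (p + 1 : ℝ)) •
    Matrix.fromBlocks (Matrix.of fun _ _ => (1 : ℝ))
      (Matrix.of fun _ _ => -(1 / β))
      (Matrix.of fun _ _ => (β : ℝ))
      (Matrix.of fun _ _ => (p : ℝ))

/-- `H₀ = [β(I_p + e_p e_pᵀ), 0; 0, (p+1)/β]`. -/
def H0 (p : ℕ) (β : ℝ) : Matrix (Fin p ⊕ Unit) (Fin p ⊕ Unit) ℝ :=
  Matrix.fromBlocks (β • ((1 : Matrix (Fin p) (Fin p) ℝ) + Matrix.of fun _ _ => (1 : ℝ))) 0 0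
    (Matrix.of fun _ _ => (p + 1 : ℝ) / β)

/-- `𝒬 = Q₀ ⊗ I_m`. -/
def calQ (p m : ℕ) (β : ℝ) : Matrix ((Fin p ⊕ Unit) × Fin m) ((Fin p ⊕ Unit) × Fin m) ℝ :=
  Q0 p β ⊗ₖ (1 : Matrix (Fin m) (Fin m) ℝ)

/-- `𝒟 = D₀ ⊗ I_m`. -/
def calD (p m : ℕ) (β : ℝ) : Matrix ((Fin p ⊕ Unit) × Fin m) ((Fin p ⊕ Unit) × Fin m) ℝ :=
  D0 p β ⊗ₖ (1 : Matrix (Fin m) (Fin m) ℝ)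

/-- `ℳ = M₀ ⊗ I_m`. -/
def calM (p m : ℕ) (β : ℝ) : Matrix ((Fin p ⊕ Unit) × Fin m) ((Fin p ⊕ Unit) × Fin m) ℝ :=
  M0 p β ⊗ₖ (1 : Matrix (Fin m) (Fin m) ℝ)

/-- `ℋ = H₀ ⊗ I_m`. -/
def calH (p m : ℕ) (β : ℝ) : Matrix ((Fin p ⊕ Unit) × Fin m) ((Fin p ⊕ Unit) × Fin m) ℝ :=
  H0 p β ⊗ₖ (1 : Matrix (Fin m) (Fin m) ℝ)

/-- `‖v‖²_G = vᵀ G v`. -/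
def nsq {p m : ℕ} (G : Matrix ((Fin p ⊕ Unit) × Fin m) ((Fin p ⊕ Unit) × Fin m) ℝ)
    (v : (Fin p ⊕ Unit) × Fin m → ℝ) : ℝ :=
  v ⬝ᵥ G.mulVec v

/-- `θ(x) = Σ_i θ_i(x_i)`. -/
def thetaSum {p : ℕ} {n : Fin p → ℕ} (θ : (i : Fin p) → (Fin (n i) → ℝ) → ℝ)
    (x : (i : Fin p) → Fin (n i) → ℝ) : ℝ :=
  ∑ i, θ i (x i)

/-- The Euclidean inner product on `ℝ^{n_1}×⋯×ℝ^{n_p}×ℝ^m`. -/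
def dotW {p m : ℕ} {n : Fin p → ℕ}
    (w w' : ((i : Fin p) → Fin (n i) → ℝ) × (Fin m → ℝ)) : ℝ :=
  (∑ i, w.1 i ⬝ᵥ w'.1 i) + w.2 ⬝ᵥ w'.2

/-- `F(w) = (−A_1ᵀλ, …, −A_pᵀλ, Σ_i A_i x_i − b)`. -/
def Fop {p m : ℕ} {n : Fin p → ℕ} (A : (i : Fin p) → Matrix (Fin m) (Fin (n i)) ℝ)
    (b : Fin m → ℝ) (w : ((i : Fin p) → Fin (n i) → ℝ) × (Fin m → ℝ)) :
    ((i : Fin p) → Fin (n i) → ℝ) × (Fin m → ℝ) :=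
  (fun i => -((A i)ᵀ.mulVec w.2), (∑ i, (A i).mulVec (w.1 i)) - b)

/-- `Pw = (A_1 x_1, …, A_p x_p, λ) ∈ ℝ^{(p+1)m}`. -/
def Pmap {p m : ℕ} {n : Fin p → ℕ} (A : (i : Fin p) → Matrix (Fin m) (Fin (n i)) ℝ)
    (w : ((i : Fin p) → Fin (n i) → ℝ) × (Fin m → ℝ)) :
    (Fin p ⊕ Unit) × Fin m → ℝ :=
  fun q => Sum.elim (fun i => (A i).mulVec (w.1 i) q.2) (fun _ => w.2 q.2) q.1

/-- `Ω = 𝒳_1 × ⋯ × 𝒳_p × ℝ^m`. -/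
def OmegaSet {p : ℕ} (m : ℕ) {n : Fin p → ℕ} (X : (i : Fin p) → Set (Fin (n i) → ℝ)) :
    Set (((i : Fin p) → Fin (n i) → ℝ) × (Fin m → ℝ)) :=
  {w | ∀ i, w.1 i ∈ X i}

/-- The solution set `Ω*` of the variational inequality VI(Ω,F,θ). -/
def VIsol {p m : ℕ} {n : Fin p → ℕ} (θ : (i : Fin p) → (Fin (n i) → ℝ) → ℝ)
    (X : (i : Fin p) → Set (Fin (n i) → ℝ))
    (A : (i : Fin p) → Matrix (Fin m) (Fin (n i)) ℝ) (b : Fin m → ℝ) :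
    Set (((i : Fin p) → Fin (n i) → ℝ) × (Fin m → ℝ)) :=
  {ws | ws ∈ OmegaSet m X ∧ ∀ w ∈ OmegaSet m X,
    thetaSum θ w.1 - thetaSum θ ws.1 + dotW (w - ws) (Fop A b ws) ≥ 0}

/-- The `λ`-component of `ξ = (u_1, …, u_p, λ)`. -/
def lamOf {p m : ℕ} (ξ : (Fin p ⊕ Unit) × Fin m → ℝ) : Fin m → ℝ :=
  fun j => ξ (Sum.inr (), j)

/-- The `u_i`-component of `ξ = (u_1, …, u_p, λ)`. -/
def uOf {p m : ℕ} (ξ : (Fin p ⊕ Unit) × Fin m → ℝ) (i : Fin p) : Fin m → ℝ :=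
  fun j => ξ (Sum.inl i, j)

/-- The parallel splitting ALM step: with input `ξ = (u_1, …, u_p, λ)` it produces
`w̃ = (x̃_1, …, x̃_p, λ̃)` where each `x̃_i ∈ 𝒳_i` minimizes
`x_i ↦ θ_i(x_i) − λᵀ A_i x_i + (β/2)‖A_i x_i − u_i‖²` over `𝒳_i`, and
`λ̃ = λ − β(Σ_i u_i − b)`. -/
def ALMStep {p m : ℕ} {n : Fin p → ℕ} (β : ℝ) (θ : (i : Fin p) → (Fin (n i) → ℝ) → ℝ)
    (X : (i : Fin p) → Set (Fin (n i) → ℝ))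
    (A : (i : Fin p) → Matrix (Fin m) (Fin (n i)) ℝ) (b : Fin m → ℝ)
    (ξ : (Fin p ⊕ Unit) × Fin m → ℝ)
    (wt : ((i : Fin p) → Fin (n i) → ℝ) × (Fin m → ℝ)) : Prop :=
  (∀ i, wt.1 i ∈ X i ∧ ∀ y ∈ X i,
      θ i (wt.1 i) - lamOf ξ ⬝ᵥ (A i).mulVec (wt.1 i) +
          β / 2 * (((A i).mulVec (wt.1 i) - uOf ξ i) ⬝ᵥ ((A i).mulVec (wt.1 i) - uOf ξ i)) ≤
        θ i y - lamOf ξ ⬝ᵥ (A i).mulVec y +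
          β / 2 * (((A i).mulVec y - uOf ξ i) ⬝ᵥ ((A i).mulVec y - uOf ξ i))) ∧
  wt.2 = lamOf ξ - β • ((∑ i, uOf ξ i) - b)

/-!
The ALM step is a prediction: for every `w ∈ Ω` its output satisfies
`θ(x) - θ(x̃) + (w - w̃)ᵀF(w̃) ≥ (Pw - ξ̃)ᵀ𝒬(ξ - ξ̃)`, by the first-order optimality of each
subproblem. Since `F` is affine with skew-symmetric linear part, testing this against a solution
gives `(ξ̃ᵏ - ξ*)ᵀ𝒬(ξᵏ - ξ̃ᵏ) ≥ 0`, and testing two consecutive predictions against each other gives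
`(ξ̃ᵏ - ξ̃ᵏ⁺¹)ᵀ𝒬((ξᵏ - ξ̃ᵏ) - (ξᵏ⁺¹ - ξ̃ᵏ⁺¹)) ≥ 0`. As `ℋ ⪰ 0`, `ℋℳ = 𝒬` and `𝒬ᵀ + 𝒬 = 2ℳᵀℋℳ`,
the first inequality makes `‖ξᵏ - ξ*‖²_ℋ` drop by at least `((2 - α)/α)‖ξᵏ - ξᵏ⁺¹‖²_ℋ` and the
second makes `‖ξᵏ - ξᵏ⁺¹‖²_ℋ` nonincreasing in `k`; summing the drops over `k ≤ N` gives the rate.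
-/

namespace Matrix

variable {ι : Type*} [Fintype ι] {H M Q : Matrix ι ι ℝ}

theorem IsHermitian.dotProduct_mulVec_comm (hH : H.IsHermitian) (a c : ι → ℝ) :
    a ⬝ᵥ H *ᵥ c = c ⬝ᵥ H *ᵥ a := by
  rw [dotProduct_mulVec, ← mulVec_transpose, ← conjTranspose_eq_transpose_of_trivial, hH,
    dotProduct_comm]

theorem dotProduct_transpose_mulVec_self (Q : Matrix ι ι ℝ) (v : ι → ℝ) :
    v ⬝ᵥ Qᵀ *ᵥ v = v ⬝ᵥ Q *ᵥ v := by
  rw [mulVec_transpose, dotProduct_comm, dotProduct_mulVec]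

theorem dotProduct_transpose_mul_mul_mulVec (M H : Matrix ι ι ℝ) (v w : ι → ℝ) :
    v ⬝ᵥ (Mᵀ * H * M) *ᵥ w = M *ᵥ v ⬝ᵥ H *ᵥ (M *ᵥ w) := by
  rw [← mulVec_mulVec, ← mulVec_mulVec, dotProduct_mulVec, vecMul_transpose]

theorem dotProduct_mulVec_self_eq_of_transpose_add (hQ : Qᵀ + Q = (2 : ℝ) • (Mᵀ * H * M))
    (v : ι → ℝ) : v ⬝ᵥ Q *ᵥ v = M *ᵥ v ⬝ᵥ H *ᵥ (M *ᵥ v) := by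
  have h := congrArg (fun G => v ⬝ᵥ G *ᵥ v) hQ
  simp only [add_mulVec, dotProduct_add, smul_mulVec, dotProduct_smul, smul_eq_mul,
    dotProduct_transpose_mulVec_self, dotProduct_transpose_mul_mul_mulVec] at h
  linarith

end Matrix

section Correction

variable {ι : Type*} [Fintype ι] {H M Q : Matrix ι ι ℝ} {α : ℝ}

theorem correction_contraction (hH : H.PosSemidef) (hHM : H * M = Q)
    (hQ : Qᵀ + Q = (2 : ℝ) • (Mᵀ * H * M)) {ξ η ξ' ξs : ι → ℝ}
    (hξ' : ξ' = ξ - α • M *ᵥ (ξ - η)) (hsol : 0 ≤ (η - ξs) ⬝ᵥ Q *ᵥ (ξ - η)) :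
    (2 - α) * ((ξ - ξ') ⬝ᵥ H *ᵥ (ξ - ξ')) ≤
      α * ((ξ - ξs) ⬝ᵥ H *ᵥ (ξ - ξs) - (ξ' - ξs) ⬝ᵥ H *ᵥ (ξ' - ξs)) := by
  set d := ξ - η
  set g := ξ - ξs
  have hstep : ξ - ξ' = α • M *ᵥ d := by rw [hξ']; abel
  have hnew : ξ' - ξs = g - α • M *ᵥ d := by rw [hξ']; simp only [g]; abel
  have hg : g ⬝ᵥ H *ᵥ (M *ᵥ d) = g ⬝ᵥ Q *ᵥ d := by rw [mulVec_mulVec, hHM]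
  have hd : d ⬝ᵥ Q *ᵥ d = M *ᵥ d ⬝ᵥ H *ᵥ (M *ᵥ d) :=
    dotProduct_mulVec_self_eq_of_transpose_add hQ d
  have hsol' : d ⬝ᵥ Q *ᵥ d ≤ g ⬝ᵥ Q *ᵥ d := by
    have : η - ξs = g - d := by simp only [g, d]; abel
    rw [this, sub_dotProduct] at hsol
    linarith
  have hsymm := hH.isHermitian.dotProduct_mulVec_comm (M *ᵥ d) g
  rw [hstep, hnew]
  simp only [mulVec_sub, mulVec_smul, dotProduct_sub, sub_dotProduct, dotProduct_smul,
    smul_dotProduct, smul_eq_mul, hsymm, hg]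
  nlinarith [mul_le_mul_of_nonneg_left hsol' (sq_nonneg α)]

theorem correction_step_le (hH : H.PosSemidef) (hHM : H * M = Q)
    (hQ : Qᵀ + Q = (2 : ℝ) • (Mᵀ * H * M)) (hα : α ∈ Set.Ioo 0 2) {ξ₀ η₀ ξ₁ η₁ ξ₂ : ι → ℝ}
    (h₁ : ξ₁ = ξ₀ - α • M *ᵥ (ξ₀ - η₀)) (h₂ : ξ₂ = ξ₁ - α • M *ᵥ (ξ₁ - η₁))
    (hcross : 0 ≤ (η₀ - η₁) ⬝ᵥ Q *ᵥ ((ξ₀ - η₀) - (ξ₁ - η₁))) :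
    (ξ₁ - ξ₂) ⬝ᵥ H *ᵥ (ξ₁ - ξ₂) ≤ (ξ₀ - ξ₁) ⬝ᵥ H *ᵥ (ξ₀ - ξ₁) := by
  obtain ⟨hα0, hα2⟩ := hα
  set c := M *ᵥ (ξ₀ - η₀)
  set e := M *ᵥ ((ξ₀ - η₀) - (ξ₁ - η₁))
  have hc₁ : M *ᵥ (ξ₁ - η₁) = c - e := by simp only [c, e, mulVec_sub]; abel
  have heta : η₀ - η₁ = α • (M *ᵥ (ξ₀ - η₀)) - ((ξ₀ - η₀) - (ξ₁ - η₁)) := by rw [h₁]; abel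
  have hce : (α • M *ᵥ (ξ₀ - η₀)) ⬝ᵥ Q *ᵥ ((ξ₀ - η₀) - (ξ₁ - η₁)) = α * (c ⬝ᵥ H *ᵥ e) := by
    rw [← hHM, ← mulVec_mulVec, smul_dotProduct, smul_eq_mul]
  have hee := dotProduct_mulVec_self_eq_of_transpose_add hQ ((ξ₀ - η₀) - (ξ₁ - η₁))
  rw [heta, sub_dotProduct, hce, hee] at hcross
  have he : 0 ≤ e ⬝ᵥ H *ᵥ e := by simpa only [star_trivial] using hH.dotProduct_mulVec_nonneg e
  have hsymm := hH.isHermitian.dotProduct_mulVec_comm c e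
  rw [show ξ₁ - ξ₂ = α • (c - e) by rw [h₂, ← hc₁]; abel, show ξ₀ - ξ₁ = α • c by rw [h₁]; abel]
  simp only [mulVec_sub, mulVec_smul, dotProduct_sub, sub_dotProduct, dotProduct_smul,
    smul_dotProduct, smul_eq_mul, hsymm]
  nlinarith [mul_nonneg (sq_nonneg α) he, mul_nonneg (sub_nonneg.2 hα2.le) (sq_nonneg α)]

theorem correction_pointwise_rate (hH : H.PosSemidef) (hHM : H * M = Q)
    (hQ : Qᵀ + Q = (2 : ℝ) • (Mᵀ * H * M)) (hα : α ∈ Set.Ioo 0 2) {N : ℕ} {ξ η : ℕ → ι → ℝ}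
    {ξs : ι → ℝ} (hrel : ∀ k ≤ N, ξ (k + 1) = ξ k - α • M *ᵥ (ξ k - η k))
    (hsol : ∀ k ≤ N, 0 ≤ (η k - ξs) ⬝ᵥ Q *ᵥ (ξ k - η k))
    (hcross : ∀ k < N, 0 ≤ (η k - η (k + 1)) ⬝ᵥ Q *ᵥ ((ξ k - η k) - (ξ (k + 1) - η (k + 1)))) :
    (ξ N - ξ (N + 1)) ⬝ᵥ H *ᵥ (ξ N - ξ (N + 1)) ≤
      α / ((2 - α) * (N + 1)) * ((ξ 0 - ξs) ⬝ᵥ H *ᵥ (ξ 0 - ξs)) := by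
  set s : ℕ → ℝ := fun k => (ξ k - ξ (k + 1)) ⬝ᵥ H *ᵥ (ξ k - ξ (k + 1))
  set f : ℕ → ℝ := fun k => (ξ k - ξs) ⬝ᵥ H *ᵥ (ξ k - ξs)
  have hanti : ∀ k ≤ N, s N ≤ s k := by
    intro k hk
    induction hk using Nat.decreasingInduction with
    | self => exact le_rfl
    | of_succ k hk ih =>
      exact ih.trans (correction_step_le hH hHM hQ hα (hrel k hk.le) (hrel (k + 1) hk)
        (hcross k hk))
  have hdecr : ∀ k ≤ N, (2 - α) * s k ≤ α * (f k - f (k + 1)) := fun k hk =>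
    correction_contraction hH hHM hQ (hrel k hk) (hsol k hk)
  have hsum : (N + 1) * ((2 - α) * s N) ≤ α * f 0 :=
    calc (N + 1) * ((2 - α) * s N)
        ≤ ∑ k ∈ Finset.range (N + 1), (2 - α) * s k := by
          simpa using Finset.card_nsmul_le_sum (Finset.range (N + 1)) (fun k => (2 - α) * s k)
            _ fun k hk => mul_le_mul_of_nonneg_left
              (hanti k (Nat.lt_succ_iff.1 (Finset.mem_range.1 hk))) (by linarith [hα.2])
      _ ≤ ∑ k ∈ Finset.range (N + 1), α * (f k - f (k + 1)) :=
          Finset.sum_le_sum fun k hk => hdecr k (Nat.lt_succ_iff.1 (Finset.mem_range.1 hk))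
      _ = α * (f 0 - f (N + 1)) := by rw [← Finset.mul_sum, Finset.sum_range_sub']
      _ ≤ α * f 0 := by
          have : 0 ≤ f (N + 1) := by
            simpa only [star_trivial] using hH.dotProduct_mulVec_nonneg (ξ (N + 1) - ξs)
          nlinarith [hα.1]
  rw [div_mul_eq_mul_div, le_div_iff₀ (by nlinarith [hα.2])]
  linarith

end Correction

theorem nonneg_of_forall_mem_Ioc_nonneg_add_mul {c K : ℝ}
    (h : ∀ t ∈ Set.Ioc (0 : ℝ) 1, 0 ≤ c + t * K) : 0 ≤ c := by
  have hlim : Filter.Tendsto (fun t : ℝ => c + t * K) (nhdsWithin 0 (Set.Ioi 0)) (nhds c) :=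
    tendsto_nhdsWithin_of_tendsto_nhds <|
      (by fun_prop : Continuous fun t : ℝ => c + t * K).tendsto' 0 c (by simp)
  exact ge_of_tendsto hlim (Filter.mem_of_superset (Ioc_mem_nhdsGT zero_lt_one) h)

theorem ConvexOn.dotProduct_le_sub_of_isMinOn {κ μ : Type*} [Fintype κ] [Fintype μ]
    {S : Set (κ → ℝ)} {φ : (κ → ℝ) → ℝ} (hφ : ConvexOn ℝ S φ) (A : Matrix μ κ ℝ)
    (lam u : μ → ℝ) {β : ℝ} {x : κ → ℝ}
    (hmin : IsMinOn (fun y => φ y - lam ⬝ᵥ A *ᵥ y + β / 2 * ((A *ᵥ y - u) ⬝ᵥ (A *ᵥ y - u))) S x)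
    (hx : x ∈ S) {y : κ → ℝ} (hy : y ∈ S) :
    (A *ᵥ y - A *ᵥ x) ⬝ᵥ (lam + β • (u - A *ᵥ x)) ≤ φ y - φ x := by
  set d := A *ᵥ y - A *ᵥ x
  set r := A *ᵥ x - u
  have hur : u - A *ᵥ x = -r := (neg_sub _ _).symm
  rw [hur, dotProduct_add, dotProduct_smul, dotProduct_neg, smul_eq_mul, ← sub_nonneg]
  refine nonneg_of_forall_mem_Ioc_nonneg_add_mul (K := β / 2 * (d ⬝ᵥ d)) fun t ⟨ht0, ht1⟩ => ?_
  have hab : (1 - t) + t = 1 := by ring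
  have hz := hφ.1 hx hy (sub_nonneg.2 ht1) ht0.le hab
  have hφz := hφ.2 hx hy (sub_nonneg.2 ht1) ht0.le hab
  have hAz : A *ᵥ ((1 - t) • x + t • y) = A *ᵥ x + t • d := by
    rw [mulVec_add, mulVec_smul, mulVec_smul]; simp only [d]; module
  have hrz : A *ᵥ x + t • d - u = r + t • d := by simp only [r]; abel
  have hmin' := isMinOn_iff.1 hmin _ hz
  have hr : A *ᵥ x - u = r := rfl
  simp only [hAz, hrz, hr, smul_eq_mul, dotProduct_add, add_dotProduct, dotProduct_smul,
    smul_dotProduct, dotProduct_comm d r, dotProduct_comm d lam] at hmin' hφz ⊢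
  refine nonneg_of_mul_nonneg_right ?_ ht0
  nlinarith

theorem H0_mul_M0 (p : ℕ) {β : ℝ} (hβ : β ≠ 0) : H0 p β * M0 p β = Q0 p β := by
  ext (i | i) (j | j) <;>
    simp only [H0, M0, Q0, fromBlocks, mul_apply, one_apply, of_apply, Fintype.sum_sum_type,
      Sum.elim_inl, Sum.elim_inr, Matrix.add_apply, Matrix.smul_apply, Matrix.zero_apply,
      Pi.neg_apply, Pi.smul_apply, smul_add, smul_of, neg_of, sub_eq_add_neg, one_div, smul_eq_mul,
      mul_add, add_mul, mul_ite, ite_mul, mul_one, mul_zero, mul_neg, zero_mul, neg_add_rev,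
      neg_neg, neg_zero, add_zero, zero_add, Finset.sum_add_distrib, Finset.sum_neg_distrib,
      Finset.sum_ite_eq, Finset.sum_ite_eq', Finset.mem_univ, ↓reduceIte, Finset.sum_const,
      Finset.card_univ, Fintype.card_fin, Finset.card_singleton, nsmul_eq_mul,
      one_smul, Finset.univ_unique, PUnit.default_eq_unit, neg_inj] <;>
    field_simp <;> ring

theorem Q0_transpose_add (p : ℕ) {β : ℝ} (hβ : β ≠ 0) :
    (Q0 p β)ᵀ + Q0 p β = (2 : ℝ) • ((M0 p β)ᵀ * Q0 p β) := by
  ext (i | i) (j | j) <;>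
    simp only [M0, Q0, fromBlocks, mul_apply, one_apply, of_apply, transpose_apply,
      transpose_add, transpose_one, Fintype.sum_sum_type, Sum.elim_inl, Sum.elim_inr,
      Matrix.add_apply, Matrix.smul_apply, Pi.neg_apply, Pi.smul_apply, smul_of, neg_of,
      sub_eq_add_neg, one_div, smul_eq_mul, add_mul, mul_add, mul_ite, one_mul, mul_one, mul_zero,
      eq_comm (a := j), neg_mul, mul_neg, neg_add_rev, neg_neg, Finset.sum_neg_distrib,
      Finset.sum_ite_eq',
      Finset.mem_univ, ↓reduceIte, Finset.sum_const, Finset.card_univ, Fintype.card_fin,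
      Finset.card_singleton, nsmul_eq_mul, one_smul, Finset.univ_unique, PUnit.default_eq_unit] <;>
    (try split_ifs) <;> field_simp <;> ring

theorem H0_eq_diagonal_add_vecMulVec (p : ℕ) (β : ℝ) : H0 p β =
    diagonal (Sum.elim (fun _ => β) fun _ => (p + 1) / β) +
      β • vecMulVec (Sum.elim 1 0) (Sum.elim 1 0) := by
  ext (i | i) (j | j) <;> simp [H0, fromBlocks, one_apply, diagonal, vecMulVec]

theorem H0_posSemidef (p : ℕ) {β : ℝ} (hβ : 0 < β) : (H0 p β).PosSemidef := by
  rw [H0_eq_diagonal_add_vecMulVec]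
  refine .add (.diagonal fun i => ?_) (.smul ?_ hβ.le)
  · rcases i with i | i <;> simp only [Pi.zero_apply, Sum.elim_inl, Sum.elim_inr] <;> positivity
  · simpa using posSemidef_vecMulVec_self_star (Sum.elim (1 : Fin p → ℝ) 0)

theorem calH_posSemidef (p m : ℕ) {β : ℝ} (hβ : 0 < β) : (calH p m β).PosSemidef :=
  (H0_posSemidef p hβ).kronecker .one

theorem calH_mul_calM (p m : ℕ) {β : ℝ} (hβ : β ≠ 0) : calH p m β * calM p m β = calQ p m β := by
  rw [calH, calM, calQ, ← mul_kronecker_mul, H0_mul_M0 p hβ, Matrix.one_mul]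

theorem calQ_transpose_add (p m : ℕ) {β : ℝ} (hβ : β ≠ 0) :
    (calQ p m β)ᵀ + calQ p m β = (2 : ℝ) • ((calM p m β)ᵀ * calH p m β * calM p m β) := by
  rw [Matrix.mul_assoc, calH_mul_calM p m hβ, calM, calQ, ← kroneckerMap_transpose,
    ← kroneckerMap_transpose, transpose_one, ← add_kronecker, ← mul_kronecker_mul, Matrix.one_mul,
    Q0_transpose_add p hβ, smul_kronecker]

theorem dotProduct_kronecker_one_mulVec {κ μ : Type*} [Fintype κ] [Fintype μ] [DecidableEq μ]
    (G : Matrix κ κ ℝ) (a c : κ × μ → ℝ) :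
    a ⬝ᵥ (G ⊗ₖ (1 : Matrix μ μ ℝ)) *ᵥ c =
      ∑ q, ∑ q', G q q' * ((fun j => a (q, j)) ⬝ᵥ fun j => c (q', j)) := by
  simp only [dotProduct, mulVec, kroneckerMap_apply, Fintype.sum_prod_type, one_apply, mul_ite,
    ite_mul, mul_one, mul_zero, zero_mul, Finset.sum_ite_eq, Finset.mem_univ, if_true,
    Finset.mul_sum]
  refine Finset.sum_congr rfl fun q _ => ?_
  rw [Finset.sum_comm]
  exact Finset.sum_congr rfl fun q' _ => Finset.sum_congr rfl fun j _ => by ring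

theorem dotProduct_calQ_mulVec {p m : ℕ} (β : ℝ) (a c : (Fin p ⊕ Unit) × Fin m → ℝ) :
    a ⬝ᵥ calQ p m β *ᵥ c =
      ∑ i, uOf a i ⬝ᵥ (β • uOf c i + lamOf c) + lamOf a ⬝ᵥ ((1 / β) • lamOf c - ∑ i, uOf c i) := by
  unfold uOf lamOf
  rw [calQ, dotProduct_kronecker_one_mulVec]
  simp only [Q0, one_div, Fintype.sum_sum_type, Finset.univ_unique, PUnit.default_eq_unit,
    Finset.sum_singleton, Finset.sum_add_distrib, fromBlocks_apply₁₁, fromBlocks_apply₁₂,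
    fromBlocks_apply₂₁, fromBlocks_apply₂₂, Matrix.smul_apply, one_apply, of_apply, smul_eq_mul,
    mul_ite, mul_one, mul_zero, ite_mul, zero_mul, neg_mul, one_mul, Finset.sum_ite_eq,
    Finset.mem_univ, ↓reduceIte, Finset.sum_neg_distrib, dotProduct_add, dotProduct_smul,
    dotProduct_sub, dotProduct_sum]
  ring

section ALMStep

variable {p m : ℕ} {n : Fin p → ℕ}

@[simp] theorem uOf_sub (ξ η : (Fin p ⊕ Unit) × Fin m → ℝ) (i : Fin p) :
    uOf (ξ - η) i = uOf ξ i - uOf η i := rfl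

@[simp] theorem lamOf_sub (ξ η : (Fin p ⊕ Unit) × Fin m → ℝ) :
    lamOf (ξ - η) = lamOf ξ - lamOf η := rfl

@[simp] theorem uOf_Pmap (A : (i : Fin p) → Matrix (Fin m) (Fin (n i)) ℝ)
    (w : ((i : Fin p) → Fin (n i) → ℝ) × (Fin m → ℝ)) (i : Fin p) :
    uOf (Pmap A w) i = A i *ᵥ w.1 i := rfl

@[simp] theorem lamOf_Pmap (A : (i : Fin p) → Matrix (Fin m) (Fin (n i)) ℝ)
    (w : ((i : Fin p) → Fin (n i) → ℝ) × (Fin m → ℝ)) :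
    lamOf (Pmap A w) = w.2 := rfl

theorem dotW_Fop (A : (i : Fin p) → Matrix (Fin m) (Fin (n i)) ℝ) (b : Fin m → ℝ)
    (w w' : ((i : Fin p) → Fin (n i) → ℝ) × (Fin m → ℝ)) :
    dotW w (Fop A b w') = -((∑ i, A i *ᵥ w.1 i) ⬝ᵥ w'.2) + w.2 ⬝ᵥ (∑ i, A i *ᵥ w'.1 i - b) := by
  simp only [dotW, Fop, dotProduct_neg, dotProduct_mulVec, vecMul_transpose, sum_dotProduct,
    Finset.sum_neg_distrib]

theorem dotW_sub_Fop_add_swap (A : (i : Fin p) → Matrix (Fin m) (Fin (n i)) ℝ) (b : Fin m → ℝ)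
    (w w' : ((i : Fin p) → Fin (n i) → ℝ) × (Fin m → ℝ)) :
    dotW (w - w') (Fop A b w') + dotW (w' - w) (Fop A b w) = 0 := by
  simp only [dotW_Fop, Prod.fst_sub, Prod.snd_sub, Pi.sub_apply, mulVec_sub,
    Finset.sum_sub_distrib, sub_dotProduct, dotProduct_sub, dotProduct_comm w.2,
    dotProduct_comm w'.2]
  ring

variable {β : ℝ} {θ : (i : Fin p) → (Fin (n i) → ℝ) → ℝ}
  {X : (i : Fin p) → Set (Fin (n i) → ℝ)} {A : (i : Fin p) → Matrix (Fin m) (Fin (n i)) ℝ}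
  {b : Fin m → ℝ} {ξ : (Fin p ⊕ Unit) × Fin m → ℝ}
  {wt : ((i : Fin p) → Fin (n i) → ℝ) × (Fin m → ℝ)}

theorem ALMStep.mem_OmegaSet (h : ALMStep β θ X A b ξ wt) : wt ∈ OmegaSet m X :=
  fun i => (h.1 i).1

theorem ALMStep.Pmap_sub_dotProduct_calQ_le (hβ : β ≠ 0) (hθ : ∀ i, ConvexOn ℝ (X i) (θ i))
    (h : ALMStep β θ X A b ξ wt) {w : ((i : Fin p) → Fin (n i) → ℝ) × (Fin m → ℝ)}
    (hw : w ∈ OmegaSet m X) :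
    (Pmap A w - Pmap A wt) ⬝ᵥ calQ p m β *ᵥ (ξ - Pmap A wt) ≤
      thetaSum θ w.1 - thetaSum θ wt.1 + dotW (w - wt) (Fop A b wt) := by
  have hblock : ∀ i, (A i *ᵥ w.1 i - A i *ᵥ wt.1 i) ⬝ᵥ
      (lamOf ξ + β • (uOf ξ i - A i *ᵥ wt.1 i)) ≤ θ i (w.1 i) - θ i (wt.1 i) := fun i =>
    (hθ i).dotProduct_le_sub_of_isMinOn (A i) _ _ (isMinOn_iff.2 (h.1 i).2) (h.1 i).1 (hw i)
  have hdual : (1 / β) • (lamOf ξ - wt.2) - ∑ i, (uOf ξ i - A i *ᵥ wt.1 i) =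
      ∑ i, A i *ᵥ wt.1 i - b := by
    rw [h.2, sub_sub_cancel, smul_smul, one_div_mul_cancel hβ, one_smul, Finset.sum_sub_distrib]
    abel
  have hprimal : ∀ i, β • (uOf ξ i - A i *ᵥ wt.1 i) + (lamOf ξ - wt.2) =
      (lamOf ξ + β • (uOf ξ i - A i *ᵥ wt.1 i)) - wt.2 := fun i => by abel
  rw [dotProduct_calQ_mulVec, dotW_Fop, sum_dotProduct]
  simp only [uOf_sub, lamOf_sub, uOf_Pmap, lamOf_Pmap, Prod.fst_sub, Prod.snd_sub, Pi.sub_apply,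
    mulVec_sub]
  rw [hdual]
  simp only [hprimal, dotProduct_sub, Finset.sum_sub_distrib, thetaSum]
  have hsum := Finset.sum_le_sum fun i (_ : i ∈ Finset.univ) => hblock i
  rw [Finset.sum_sub_distrib] at hsum
  linarith

theorem ALMStep.Pmap_sub_dotProduct_calQ_nonneg_of_mem_VIsol (hβ : β ≠ 0)
    (hθ : ∀ i, ConvexOn ℝ (X i) (θ i)) (h : ALMStep β θ X A b ξ wt)
    {ws : ((i : Fin p) → Fin (n i) → ℝ) × (Fin m → ℝ)} (hws : ws ∈ VIsol θ X A b) :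
    0 ≤ (Pmap A wt - Pmap A ws) ⬝ᵥ calQ p m β *ᵥ (ξ - Pmap A wt) := by
  have hpred := h.Pmap_sub_dotProduct_calQ_le hβ hθ hws.1
  have hvi := hws.2 wt h.mem_OmegaSet
  have hskew := dotW_sub_Fop_add_swap A b ws wt
  rw [← neg_sub, neg_dotProduct]
  linarith

theorem ALMStep.Pmap_sub_dotProduct_calQ_sub_nonneg (hβ : β ≠ 0)
    (hθ : ∀ i, ConvexOn ℝ (X i) (θ i)) (h : ALMStep β θ X A b ξ wt)
    {ξ' : (Fin p ⊕ Unit) × Fin m → ℝ} {wt' : ((i : Fin p) → Fin (n i) → ℝ) × (Fin m → ℝ)}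
    (h' : ALMStep β θ X A b ξ' wt') :
    0 ≤ (Pmap A wt - Pmap A wt') ⬝ᵥ calQ p m β *ᵥ ((ξ - Pmap A wt) - (ξ' - Pmap A wt')) := by
  have hpred := h.Pmap_sub_dotProduct_calQ_le hβ hθ h'.mem_OmegaSet
  have hpred' := h'.Pmap_sub_dotProduct_calQ_le hβ hθ h.mem_OmegaSet
  have hskew := dotW_sub_Fop_add_swap A b wt' wt
  have hswap : (Pmap A wt - Pmap A wt') ⬝ᵥ calQ p m β *ᵥ (ξ - Pmap A wt) =
      -((Pmap A wt' - Pmap A wt) ⬝ᵥ calQ p m β *ᵥ (ξ - Pmap A wt)) := by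
    rw [← neg_dotProduct, neg_sub]
  rw [mulVec_sub, dotProduct_sub, hswap]
  linarith

end ALMStep

theorem stmt18_general {p m : ℕ} {n : Fin p → ℕ}
    (θ : (i : Fin p) → (Fin (n i) → ℝ) → ℝ) (hθ : ∀ i, ConvexOn ℝ Set.univ (θ i))
    (X : (i : Fin p) → Set (Fin (n i) → ℝ))
    (hXconv : ∀ i, Convex ℝ (X i))
    (A : (i : Fin p) → Matrix (Fin m) (Fin (n i)) ℝ) (b : Fin m → ℝ)
    {β : ℝ} (hβ : 0 < β) {α : ℝ} (hα : α ∈ Set.Ioo (0 : ℝ) 2) (N : ℕ)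
    (ξ : ℕ → ((Fin p ⊕ Unit) × Fin m → ℝ))
    (wt : ℕ → ((i : Fin p) → Fin (n i) → ℝ) × (Fin m → ℝ))
    (hstep : ∀ k ≤ N + 1, ALMStep β θ X A b (ξ k) (wt k))
    (hrel : ∀ k ≤ N + 1, ξ (k + 1) = ξ k - α • (calM p m β).mulVec (ξ k - Pmap A (wt k))) :
    ∀ ξs ∈ Pmap A '' VIsol θ X A b,
      nsq (calH p m β) (ξ N - ξ (N + 1)) ≤
        α / ((2 - α) * (N + 1)) * nsq (calH p m β) (ξ 0 - ξs) := by
  rintro _ ⟨ws, hws, rfl⟩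
  have hθX : ∀ i, ConvexOn ℝ (X i) (θ i) := fun i => (hθ i).subset (Set.subset_univ _) (hXconv i)
  exact correction_pointwise_rate (calH_posSemidef p m hβ) (calH_mul_calM p m hβ.ne')
    (calQ_transpose_add p m hβ.ne') hα (η := fun k => Pmap A (wt k))
    (fun k hk => hrel k (by omega))
    (fun k hk => (hstep k (by omega)).Pmap_sub_dotProduct_calQ_nonneg_of_mem_VIsol hβ.ne' hθX hws)
    (fun k hk => (hstep k (by omega)).Pmap_sub_dotProduct_calQ_sub_nonneg hβ.ne' hθX
      (hstep (k + 1) (by omega)))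

/-- Point-wise convergence rate: for iterates generated for `k = 0,…,N+1` by the parallel
splitting ALM step followed by the relaxation step `ξ^{k+1} = ξ^k − αℳ(ξ^k − ξ̃^k)` with
`α ∈ (0,2)`, for every `ξ* ∈ Ξ*`:
`‖ξ^N − ξ^{N+1}‖²_ℋ ≤ (α/((2 − α)(N+1)))‖ξ^0 − ξ*‖²_ℋ`. -/
theorem stmt18 {p m : ℕ} {n : Fin p → ℕ} (hp : 1 ≤ p)
    (θ : (i : Fin p) → (Fin (n i) → ℝ) → ℝ) (hθ : ∀ i, ConvexOn ℝ Set.univ (θ i))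
    (X : (i : Fin p) → Set (Fin (n i) → ℝ))
    (hXconv : ∀ i, Convex ℝ (X i)) (hXclosed : ∀ i, IsClosed (X i))
    (hXne : ∀ i, (X i).Nonempty)
    (A : (i : Fin p) → Matrix (Fin m) (Fin (n i)) ℝ) (b : Fin m → ℝ)
    {β : ℝ} (hβ : 0 < β) {α : ℝ} (hα : α ∈ Set.Ioo (0 : ℝ) 2) (N : ℕ)
    (ξ : ℕ → ((Fin p ⊕ Unit) × Fin m → ℝ))
    (wt : ℕ → ((i : Fin p) → Fin (n i) → ℝ) × (Fin m → ℝ))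
    (hstep : ∀ k ≤ N + 1, ALMStep β θ X A b (ξ k) (wt k))
    (hrel : ∀ k ≤ N + 1, ξ (k + 1) = ξ k - α • (calM p m β).mulVec (ξ k - Pmap A (wt k))) :
    ∀ ξs ∈ Pmap A '' VIsol θ X A b,
      nsq (calH p m β) (ξ N - ξ (N + 1)) ≤
        α / ((2 - α) * (N + 1)) * nsq (calH p m β) (ξ 0 - ξs) :=
  stmt18_general θ hθ X hXconv A b hβ hα N ξ wt hstep hrel
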